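/- Let T_n ∈ SL(2,ℤ), n ≥ 1, be hyperbolic with largest eigenvalue λ_n, and suppose the sequence (λ_n) is bounded. Then for every k ≥ 1, the sequence T_n is mixing if and only if the sequence T_nᵏ is mixing. -/

import Mathlib

open Matrix Filter Topology

noncomputable section

abbrev SL2 := Matrix.SpecialLinearGroup (Fin 2) ℤ

/-- All eigenvalues of `M` have absolute value different from `1`. -/
def IsHyperbolic (M : Matrix (Fin 2) (Fin 2) ℤ) : Prop :=
  ∀ z : ℂ, (M.map (Int.cast : ℤ → ℂ)).charpoly.IsRoot z → ‖z‖ ≠ 1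

/-- A sequence of integer matrices is mixing on 𝕋² (Fourier-analytic characterization). -/
def MixingSeq (T : ℕ → Matrix (Fin 2) (Fin 2) ℤ) : Prop :=
  ∀ x y : Fin 2 → ℤ, ¬(x = 0 ∧ y = 0) → {n : ℕ | (T n)ᵀ.mulVec x + y = 0}.Finite

open Polynomial in
lemma my_charpoly_fin_two {R : Type*} [CommRing R] (M : Matrix (Fin 2) (Fin 2) R) :
    M.charpoly = X ^ 2 - C M.trace * X + C M.det := by
  rw [Matrix.charpoly, Matrix.det_fin_two]
  simp [charmatrix_apply_eq, charmatrix_apply_ne, Matrix.trace_fin_two, Matrix.det_fin_two]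
  ring

open Polynomial in
lemma my_cayley (M : Matrix (Fin 2) (Fin 2) ℤ) (h : M.det = 1) :
    M * M = M.trace • M - 1 := by
  have h0 := Matrix.aeval_self_charpoly M
  rw [my_charpoly_fin_two, h] at h0
  simp only [map_add, map_sub, _root_.map_mul, aeval_X, aeval_C, _root_.map_one, map_pow] at h0
  have ht : (algebraMap ℤ (Matrix (Fin 2) (Fin 2) ℤ)) M.trace * M = M.trace • M := by
    rw [Algebra.algebraMap_eq_smul_one, smul_mul_assoc, one_mul]
  rw [ht, pow_two] at h0
  have h1 : (M * M + 1) - M.trace • M = 0 := by rw [← h0]; abel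
  rw [eq_sub_iff_add_eq, sub_eq_zero.mp h1]

/-- The coefficients `(α, β)` with `M ^ k = α • M + β • 1`, depending only on trace and `k`. -/
def ab (t : ℤ) : ℕ → ℤ × ℤ
  | 0 => (0, 1)
  | k + 1 => (t * (ab t k).1 + (ab t k).2, -(ab t k).1)

lemma matpow (M : Matrix (Fin 2) (Fin 2) ℤ) (h : M.det = 1) (k : ℕ) :
    M ^ k = (ab M.trace k).1 • M + (ab M.trace k).2 • 1 := by
  induction k with
  | zero => simp [ab]
  | succ k ih =>
      rw [pow_succ, ih, add_mul, smul_mul_assoc, smul_mul_assoc, one_mul,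
        my_cayley M h, ab]
      simp only [smul_sub, smul_smul]
      module

lemma scalarpow (t : ℤ) (l : ℝ) (h : l ^ 2 = (t : ℝ) * l - 1) (k : ℕ) :
    l ^ k = ((ab t k).1 : ℝ) * l + ((ab t k).2 : ℝ) := by
  induction k with
  | zero => simp [ab]
  | succ k ih =>
      rw [pow_succ, ih, ab]
      push_cast
      linear_combination (((ab t k).1 : ℝ)) * h

open Polynomial in
lemma rootrel (M : Matrix (Fin 2) (Fin 2) ℤ) (h : M.det = 1) (l : ℝ)
    (hr : ((M.map (Int.cast : ℤ → ℝ)).charpoly).IsRoot l) :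
    l ^ 2 = (M.trace : ℝ) * l - 1 := by
  have h2 := h
  rw [Matrix.det_fin_two] at h2
  have hdet : (M.map (Int.cast : ℤ → ℝ)).det = 1 := by
    rw [Matrix.det_fin_two]
    simp only [Matrix.map_apply]
    exact_mod_cast h2
  have htr : (M.map (Int.cast : ℤ → ℝ)).trace = (M.trace : ℝ) := by
    simp [Matrix.trace_fin_two, Matrix.map_apply]
  rw [Polynomial.IsRoot, my_charpoly_fin_two, hdet, htr] at hr
  simp only [eval_add, eval_sub, eval_pow, eval_mul, eval_X, eval_C, eval_one] at hr
  linarith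

lemma a_ne_zero (M : Matrix (Fin 2) (Fin 2) ℤ) (h : M.det = 1) (l : ℝ)
    (hsq : l ^ 2 = (M.trace : ℝ) * l - 1) (hl : 1 < |l|) (k : ℕ) (hk : 1 ≤ k) :
    (ab M.trace k).1 ≠ 0 := by
  intro h0
  have hpow := matpow M h k
  rw [h0, zero_smul, zero_add] at hpow
  have hdet : M.det ^ k = ((ab M.trace k).2) ^ 2 := by
    rw [← Matrix.det_pow, hpow, Matrix.det_smul, Matrix.det_one]
    simp [Fintype.card_fin]
  rw [h, one_pow] at hdet
  have hb : |(ab M.trace k).2| = 1 := by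
    have hu : (ab M.trace k).2 = 1 ∨ (ab M.trace k).2 = -1 :=
      Int.isUnit_iff.mp (IsUnit.of_mul_eq_one _ (by rw [← sq]; omega))
    rcases hu with hu | hu <;> simp [hu]
  have hs := scalarpow M.trace l hsq k
  rw [h0] at hs
  have hlk : 1 < |l ^ k| := by
    rw [abs_pow]
    exact one_lt_pow₀ hl (by omega)
  rw [hs] at hlk
  simp only [Int.cast_zero, zero_mul, zero_add] at hlk
  rw [← Int.cast_abs, hb] at hlk
  norm_num at hlk

lemma trace_bound (t : ℤ) (l : ℝ) (hsq : l ^ 2 = (t : ℝ) * l - 1) (hl : 1 < |l|)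
    (C : ℝ) (hC : |l| ≤ C) : |(t : ℝ)| ≤ C + 1 := by
  have hl0 : l ≠ 0 := by
    intro h; rw [h, abs_zero] at hl; linarith
  have ht : (t : ℝ) = l + 1 / l := by
    field_simp
    linarith
  rw [ht]
  calc |l + 1 / l| ≤ |l| + |1 / l| := abs_add_le _ _
    _ ≤ C + 1 := by
        have h1 : |1 / l| = 1 / |l| := by rw [abs_div, abs_one]
        have h2 : 1 / |l| ≤ 1 := by
          rw [div_le_one (by linarith)]; linarith
        linarith

theorem stmt10 (T : ℕ → SL2) (hT : ∀ n, IsHyperbolic ↑(T n)) (lam : ℕ → ℝ)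
    (hroot : ∀ n, (((T n : Matrix (Fin 2) (Fin 2) ℤ)).map
      (Int.cast : ℤ → ℝ)).charpoly.IsRoot (lam n))
    (habs : ∀ n, 1 < |lam n|) (hbdd : ∃ C : ℝ, ∀ n, |lam n| ≤ C)
    (k : ℕ) (hk : 1 ≤ k) :
    MixingSeq (fun n => ((T n : SL2) : Matrix (Fin 2) (Fin 2) ℤ)) ↔
      MixingSeq (fun n => ((T n ^ k : SL2) : Matrix (Fin 2) (Fin 2) ℤ)) := by
  obtain ⟨C, hC⟩ := hbdd
  set A : ℕ → Matrix (Fin 2) (Fin 2) ℤ := fun n => ((T n : SL2) : Matrix (Fin 2) (Fin 2) ℤ)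
    with hA
  have hdet : ∀ n, (A n).det = 1 := fun n => (T n).2
  have hsq : ∀ n, (lam n) ^ 2 = ((A n).trace : ℝ) * lam n - 1 :=
    fun n => rootrel _ (hdet n) _ (hroot n)
  set m : ℤ := ⌈C⌉ + 1 with hm
  have htr : ∀ n, (A n).trace ∈ Finset.Icc (-m) m := by
    intro n
    have hb := trace_bound _ _ (hsq n) (habs n) C (hC n)
    have hb2 : |(A n).trace| ≤ m := by
      have : ((|(A n).trace| : ℤ) : ℝ) ≤ (m : ℝ) := by
        rw [Int.cast_abs]
        calc |((A n).trace : ℝ)| ≤ C + 1 := hb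
          _ ≤ (m : ℝ) := by
              rw [hm]; push_cast; linarith [Int.le_ceil C]
      exact_mod_cast this
    rw [Finset.mem_Icc]
    exact abs_le.mp hb2
  have hfib : ∀ S : Set ℕ, (∀ t : ℤ, (S ∩ {n | (A n).trace = t}).Finite) → S.Finite := by
    intro S hf
    apply Set.Finite.subset
      (Set.Finite.biUnion (Finset.Icc (-m) m).finite_toSet
        (fun t _ => hf t))
    intro n hn
    exact Set.mem_biUnion (htr n) ⟨hn, rfl⟩
  have hpowT : ∀ n, ((T n ^ k : SL2) : Matrix (Fin 2) (Fin 2) ℤ)ᵀ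
      = (ab (A n).trace k).1 • (A n)ᵀ + (ab (A n).trace k).2 • 1 := by
    intro n
    rw [Matrix.SpecialLinearGroup.coe_pow]
    show ((A n) ^ k)ᵀ = _
    rw [Matrix.transpose_pow]
    have h1 := matpow (A n)ᵀ (by rw [Matrix.det_transpose]; exact hdet n) k
    rwa [Matrix.trace_transpose] at h1
  have hane : ∀ n, (ab (A n).trace k).1 ≠ 0 :=
    fun n => a_ne_zero (A n) (hdet n) (lam n) (hsq n) (habs n) k hk
  constructor
  · intro hmix x y hxy
    by_cases hne : {n : ℕ | ((T n ^ k : SL2) : Matrix (Fin 2) (Fin 2) ℤ)ᵀ.mulVec x + y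
        = 0}.Nonempty
    · have hx : x ≠ 0 := by
        rintro rfl
        obtain ⟨n, hn⟩ := hne
        simp only [Set.mem_setOf_eq, Matrix.mulVec_zero, zero_add] at hn
        exact hxy ⟨rfl, hn⟩
      apply hfib
      intro t
      rcases Set.eq_empty_or_nonempty
        ({n : ℕ | ((T n ^ k : SL2) : Matrix (Fin 2) (Fin 2) ℤ)ᵀ.mulVec x + y = 0}
          ∩ {n | (A n).trace = t}) with hE | ⟨n0, _, hn0t⟩
      · rw [hE]; exact Set.finite_empty
      · have ha : (ab t k).1 ≠ 0 := by rw [← hn0t]; exact hane n0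
        apply Set.Finite.subset
          (hmix ((ab t k).1 • x) ((ab t k).2 • x + y)
            (fun h => (smul_ne_zero ha hx) h.1))
        rintro n ⟨hnS, hnt⟩
        have hnS' : ((T n ^ k : SL2) : Matrix (Fin 2) (Fin 2) ℤ)ᵀ.mulVec x + y = 0 := hnS
        rw [hpowT n, hnt] at hnS'
        show (A n)ᵀ.mulVec ((ab t k).1 • x) + ((ab t k).2 • x + y) = 0
        rw [Matrix.mulVec_smul]
        rw [Matrix.add_mulVec, Matrix.smul_mulVec, Matrix.smul_mulVec,
          Matrix.one_mulVec] at hnS'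
        rw [← hnS']
        abel
    · rw [Set.not_nonempty_iff_eq_empty] at hne
      exact hne ▸ Set.finite_empty
  · intro hmix x y hxy
    by_cases hne : {n : ℕ | (A n)ᵀ.mulVec x + y = 0}.Nonempty
    · have hx : x ≠ 0 := by
        rintro rfl
        obtain ⟨n, hn⟩ := hne
        simp only [Set.mem_setOf_eq, Matrix.mulVec_zero, zero_add] at hn
        exact hxy ⟨rfl, hn⟩
      apply hfib
      intro t
      apply Set.Finite.subset
        (hmix x ((ab t k).1 • y - (ab t k).2 • x) (fun h => hx h.1))
      rintro n ⟨hnS, hnt⟩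
      have hnS' : (A n)ᵀ.mulVec x + y = 0 := hnS
      have hE : (A n)ᵀ.mulVec x = -y := eq_neg_of_add_eq_zero_left hnS'
      show ((T n ^ k : SL2) : Matrix (Fin 2) (Fin 2) ℤ)ᵀ.mulVec x
        + ((ab t k).1 • y - (ab t k).2 • x) = 0
      rw [hpowT n, hnt, Matrix.add_mulVec, Matrix.smul_mulVec,
        Matrix.smul_mulVec, Matrix.one_mulVec, hE]
      simp only [smul_neg]
      abel
    · rw [Set.not_nonempty_iff_eq_empty] at hne
      exact hne ▸ Set.finite_empty
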